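/- Let Q ⊂ R^d be compact and let G be a class of functions from Q to R with ‖g‖_{L²(Q)} ≤ M for every g ∈ G. For λ_N > 0 and an integer R ≥ 1, define F_{R,G,λ_N} = { (u,v) ↦ Σ_{r=1}^R Σ_{s=1}^R λ_{r,s} g_r(u) g_s(v) : g_r ∈ G, 0 ⪯ Λ = (λ_{r,s}) ⪯ λ_N I_R }. Then for every ε > 0, N(ε, F_{R,G,λ_N}, ‖·‖_{L²(Q×Q)}) ≤ [ ((M²R²λ_N + ε)/ε) × { (2e(4M²R²λ_N + ε)/ε) × N(ε/(8MR²λ_N), G, ‖·‖_{L²(Q)}) }^R ]^R. -/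

import Mathlib

/-!
Given `Λ` and `g_1, …, g_R`, replace each `g_r` by a nearest point of a minimal
`δ`-net of `G`, `δ = ε / (8 M R² λ)`, and `Λ` by an admissible matrix whose entries are within
one grid step `2λ / (n + 1)` of those of `Λ`, `n = ⌊8 M² R² λ / ε⌋`; this is possible because
`0 ⪯ Λ ⪯ λ I` confines every entry to `[-λ, λ]`. Since `‖f ⊗ g‖_{L²(Q×Q)} = ‖f‖ ‖g‖`, expanding
the difference of the two kernels bilinearly bounds it by `R² (step · M² + 2 λ δ M) ≤ ε / 2`.
The resulting net has at most `(n + 2)^{R²} N(δ, G)^R` elements, and `n + 2 ≤ 2e (4M²R²λ + ε) / ε`.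
-/

open MeasureTheory
open scoped ENNReal

noncomputable section

def L2dist {α : Type*} [MeasureSpace α] (S : Set α) (f g : α → ℝ) : ℝ :=
  Real.sqrt (∫ x in S, (f x - g x) ^ 2)

/-- The `ε`-covering number of `T` with respect to the (pseudo-)distance `ρ`: the smallest
cardinality of a finite subset `T' ⊆ T` such that every `t ∈ T` is within distance `ε` of
some `t' ∈ T'`; it is `∞` if no finite cover exists. -/
def covN {β : Type*} (ρ : β → β → ℝ) (ε : ℝ) (T : Set β) : ℝ≥0∞ :=
  sInf ((fun F : Finset β => (F.card : ℝ≥0∞)) ''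
    {F : Finset β | ↑F ⊆ T ∧ ∀ t ∈ T, ∃ t' ∈ F, ρ t t' ≤ ε})

/-- The generic restricted CovNet kernel class
`F_{R,G,λ} = {Σ_{r,s} λ_{r,s} g_r(u) g_s(v) : g_r ∈ G, 0 ⪯ Λ ⪯ λ·I_R}`. -/
def covnetClassOf {d : ℕ} (G : Set ((Fin d → ℝ) → ℝ)) (R : ℕ) (lam : ℝ) :
    Set ((Fin d → ℝ) × (Fin d → ℝ) → ℝ) :=
  {kern | ∃ (Λ : Matrix (Fin R) (Fin R) ℝ) (g : Fin R → (Fin d → ℝ) → ℝ),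
    Λ.PosSemidef ∧ (lam • (1 : Matrix (Fin R) (Fin R) ℝ) - Λ).PosSemidef ∧
    (∀ r, g r ∈ G) ∧ ∀ p, kern p = ∑ r, ∑ s, Λ r s * g r p.1 * g s p.2}

theorem Matrix.PosSemidef.two_mul_abs_apply_le {n : Type*} [Fintype n]
    {A : Matrix n n ℝ} (hA : A.PosSemidef) (i j : n) :
    2 * |A i j| ≤ A i i + A j j := by
  classical
  have hsymm : A j i = A i j := by simpa using hA.1.apply i j
  have hform (c : ℝ) : 0 ≤ A i i + 2 * c * A i j + c ^ 2 * A j j := by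
    have := hA.dotProduct_mulVec_nonneg (Pi.single i 1 + c • Pi.single j 1)
    simp only [star_trivial, Matrix.mulVec_add, Matrix.mulVec_single, MulOpposite.op_one,
      one_smul, Matrix.mulVec_smul, dotProduct_add, add_dotProduct, single_dotProduct,
      Matrix.col_apply, one_mul, smul_dotProduct, hsymm, smul_eq_mul, dotProduct_smul] at this
    linarith
  have hplus := hform 1
  have hminus := hform (-1)
  cases abs_cases (A i j) <;> linarith

theorem Matrix.PosSemidef.abs_apply_le_of_posSemidef_smul_one_sub {n : Type*} [Fintype n]
    [DecidableEq n] {A : Matrix n n ℝ} {c : ℝ} (hA : A.PosSemidef)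
    (hcA : (c • (1 : Matrix n n ℝ) - A).PosSemidef) (i j : n) : |A i j| ≤ c := by
  have hdiag (k : n) : A k k ≤ c := by simpa using hcA.diag_nonneg (i := k)
  linarith [hA.two_mul_abs_apply_le i j, hdiag i, hdiag j]

section CoveringNumber

variable {β : Type*} {ρ : β → β → ℝ} {ε : ℝ} {T : Set β}

theorem covN_le_card {F : Finset β} (hFT : ↑F ⊆ T) (hF : ∀ t ∈ T, ∃ t' ∈ F, ρ t t' ≤ ε) :
    covN ρ ε T ≤ F.card :=
  sInf_le ⟨F, ⟨hFT, hF⟩, rfl⟩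

theorem exists_finset_card_eq_covN (h : covN ρ ε T ≠ ⊤) :
    ∃ F : Finset β, ↑F ⊆ T ∧ (∀ t ∈ T, ∃ t' ∈ F, ρ t t' ≤ ε) ∧
      (F.card : ℝ≥0∞) = covN ρ ε T := by
  set nets := {F : Finset β | ↑F ⊆ T ∧ ∀ t ∈ T, ∃ t' ∈ F, ρ t t' ≤ ε}
  have hne : nets.Nonempty := by
    by_contra hempty
    exact h (show sInf (_ '' nets) = ⊤ by
      rw [Set.not_nonempty_iff_eq_empty.1 hempty, Set.image_empty, sInf_empty])
  obtain ⟨F, hF, hmin⟩ := (measure Finset.card).wf.has_min nets hne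
  refine ⟨F, hF.1, hF.2, le_antisymm (le_sInf ?_) (covN_le_card hF.1 hF.2)⟩
  rintro _ ⟨F', hF', rfl⟩
  exact Nat.cast_le.2 (not_lt.1 (hmin F' hF'))

end CoveringNumber

theorem Set.MapsTo.exists_finset_transversal {β γ : Type*} {κ : β → γ} {S : Set β}
    {C : Finset γ} (hκ : Set.MapsTo κ S C) :
    ∃ F : Finset β, ↑F ⊆ S ∧ F.card ≤ C.card ∧ ∀ x ∈ S, ∃ y ∈ F, κ y = κ x := by
  obtain ⟨S', hS'S, hbij⟩ := Set.exists_subset_bijOn S κ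
  have hfin : S'.Finite :=
    Set.Finite.of_finite_image (C.finite_toSet.subset (hbij.image_eq ▸ hκ.image_subset))
      hbij.injOn
  refine ⟨hfin.toFinset, by simpa using hS'S, ?_, fun x hx => ?_⟩
  · exact Finset.card_le_card_of_injOn κ (fun x hx => hκ (hS'S (by simpa using hx)))
      (by simpa using hbij.injOn)
  · obtain ⟨y, hy, hyx⟩ := hbij.surjOn ⟨x, hx, rfl⟩
    exact ⟨y, by simpa using hy, hyx⟩

theorem exists_finset_net_of_forall_abs_le {β ι : Type*} [Fintype ι] (φ : β → ι → ℝ)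
    {S : Set β} {c h : ℝ} (hh : 0 < h) (hS : ∀ x ∈ S, ∀ i, |φ x i| ≤ c) :
    ∃ F : Finset β, ↑F ⊆ S ∧ F.card ≤ (⌊2 * c / h⌋₊ + 1) ^ Fintype.card ι ∧
      ∀ x ∈ S, ∃ y ∈ F, ∀ i, |φ x i - φ y i| < h := by
  classical
  set cell : β → ι → ℕ := fun x i => ⌊(φ x i + c) / h⌋₊
  have hcell : Set.MapsTo cell S
      ↑(Fintype.piFinset fun _ : ι => Finset.range (⌊2 * c / h⌋₊ + 1)) := by
    intro x hx
    simp only [Finset.mem_coe, Fintype.mem_piFinset, Finset.mem_range, cell]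
    intro i
    have := abs_le.1 (hS x hx i)
    exact Nat.lt_succ_of_le (Nat.floor_le_floor (by gcongr; linarith))
  obtain ⟨F, hFS, hFcard, hF⟩ := hcell.exists_finset_transversal
  refine ⟨F, hFS, by simpa using hFcard, fun x hx => ?_⟩
  obtain ⟨y, hyF, hyx⟩ := hF x hx
  refine ⟨y, hyF, fun i => ?_⟩
  have hx0 : 0 ≤ (φ x i + c) / h := div_nonneg (by linarith [neg_abs_le (φ x i), hS x hx i]) hh.le
  have hy0 : 0 ≤ (φ y i + c) / h :=
    div_nonneg (by linarith [neg_abs_le (φ y i), hS y (hFS hyF) i]) hh.le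
  have hfloor : ⌊(φ x i + c) / h⌋ = ⌊(φ y i + c) / h⌋ := by
    rw [← Int.natCast_floor_eq_floor hx0, ← Int.natCast_floor_eq_floor hy0]
    exact congrArg _ (congrFun hyx i).symm
  have := Int.abs_sub_lt_one_of_floor_eq_floor hfloor
  rwa [← sub_div, add_sub_add_right_eq_sub, abs_div, abs_of_pos hh, div_lt_one hh] at this

namespace MeasureTheory

variable {α β : Type*} [MeasurableSpace α] [MeasurableSpace β] {μ : Measure α} {ν : Measure β}

theorem eLpNorm_two_eq_ofReal_sqrt_integral {f : α → ℝ} (hf : MemLp f 2 μ) :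
    eLpNorm f 2 μ = ENNReal.ofReal (Real.sqrt (∫ x, f x ^ 2 ∂μ)) := by
  rw [hf.eLpNorm_eq_integral_rpow_norm two_ne_zero ENNReal.ofNat_ne_top, Real.sqrt_eq_rpow]
  simp [sq_abs]

theorem AEStronglyMeasurable.mul_prod {f : α → ℝ} {g : β → ℝ} (hf : AEStronglyMeasurable f μ)
    (hg : AEStronglyMeasurable g ν) :
    AEStronglyMeasurable (fun z : α × β => f z.1 * g z.2) (μ.prod ν) :=
  (hf.comp_quasiMeasurePreserving Measure.quasiMeasurePreserving_fst).mul
    (hg.comp_quasiMeasurePreserving Measure.quasiMeasurePreserving_snd)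

variable [SFinite ν]

theorem eLpNorm_mul_prod {f : α → ℝ} {g : β → ℝ} (hf : AEStronglyMeasurable f μ)
    (hg : AEStronglyMeasurable g ν) {p : ℝ≥0∞} (hp0 : p ≠ 0) (hp : p ≠ ∞) :
    eLpNorm (fun z : α × β => f z.1 * g z.2) p (μ.prod ν) = eLpNorm f p μ * eLpNorm g p ν := by
  simp only [eLpNorm_eq_lintegral_rpow_enorm_toReal hp0 hp, enorm_mul,
    ENNReal.mul_rpow_of_nonneg _ _ ENNReal.toReal_nonneg]
  rw [lintegral_prod_mul (hf.aemeasurable.enorm.pow_const _) (hg.aemeasurable.enorm.pow_const _),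
    ENNReal.mul_rpow_of_nonneg _ _ (by positivity)]

theorem MemLp.mul_prod {f : α → ℝ} {g : β → ℝ} {p : ℝ≥0∞} (hp : p ≠ ∞) (hf : MemLp f p μ)
    (hg : MemLp g p ν) :
    MemLp (fun z : α × β => f z.1 * g z.2) p (μ.prod ν) := by
  refine ⟨hf.1.mul_prod hg.1, ?_⟩
  rcases eq_or_ne p 0 with rfl | hp0
  · simp
  rw [eLpNorm_mul_prod hf.1 hg.1 hp0 hp]
  exact ENNReal.mul_lt_top hf.2 hg.2

end MeasureTheory

def bilinearKernel {α ι : Type*} [Fintype ι] (Λ : Matrix ι ι ℝ) (f g : ι → α → ℝ) (p : α × α) :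
    ℝ :=
  ∑ r, ∑ s, Λ r s * f r p.1 * g s p.2

section Kernel

variable {α ι : Type*} [Fintype ι]

theorem bilinearKernel_eq_sum (Λ : Matrix ι ι ℝ) (f g : ι → α → ℝ) :
    bilinearKernel Λ f g = ∑ r, ∑ s, Λ r s • fun p : α × α => f r p.1 * g s p.2 := by
  ext p
  simp [bilinearKernel, mul_assoc]

theorem bilinearKernel_sub_bilinearKernel (Λ Λ' : Matrix ι ι ℝ) (g g' : ι → α → ℝ) :
    bilinearKernel Λ g g - bilinearKernel Λ' g' g'
      = bilinearKernel (Λ - Λ') g g + bilinearKernel Λ' (g - g') g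
        + bilinearKernel Λ' g' (g - g') := by
  ext p
  simp only [bilinearKernel, Pi.sub_apply, Pi.add_apply, Matrix.sub_apply,
    ← Finset.sum_sub_distrib, ← Finset.sum_add_distrib]
  congr! 2 with r - s -
  ring

variable [MeasurableSpace α] {μ : Measure α}

theorem aestronglyMeasurable_bilinearKernel (Λ : Matrix ι ι ℝ) {f g : ι → α → ℝ}
    (hf : ∀ r, AEStronglyMeasurable (f r) μ) (hg : ∀ r, AEStronglyMeasurable (g r) μ) :
    AEStronglyMeasurable (bilinearKernel Λ f g) (μ.prod μ) := by
  rw [bilinearKernel_eq_sum]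
  exact Finset.aestronglyMeasurable_sum _ fun r _ => Finset.aestronglyMeasurable_sum _
    fun s _ => ((hf r).mul_prod (hg s)).const_smul _

variable [SFinite μ]

theorem memLp_bilinearKernel (Λ : Matrix ι ι ℝ) {f g : ι → α → ℝ} (hf : ∀ r, MemLp (f r) 2 μ)
    (hg : ∀ r, MemLp (g r) 2 μ) : MemLp (bilinearKernel Λ f g) 2 (μ.prod μ) := by
  rw [bilinearKernel_eq_sum]
  exact memLp_finsetSum' _ fun r _ => memLp_finsetSum' _ fun s _ =>
    ((hf r).mul_prod ENNReal.ofNat_ne_top (hg s)).const_smul _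

theorem eLpNorm_bilinearKernel_le {Λ : Matrix ι ι ℝ} {f g : ι → α → ℝ} {c a b : ℝ≥0∞}
    (hf : ∀ r, AEStronglyMeasurable (f r) μ) (hg : ∀ r, AEStronglyMeasurable (g r) μ)
    (hΛ : ∀ r s, ‖Λ r s‖ₑ ≤ c) (hfa : ∀ r, eLpNorm (f r) 2 μ ≤ a)
    (hgb : ∀ r, eLpNorm (g r) 2 μ ≤ b) :
    eLpNorm (bilinearKernel Λ f g) 2 (μ.prod μ) ≤ Fintype.card ι ^ 2 * (c * a * b) := by
  have hmeas (r s : ι) : AEStronglyMeasurable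
      (Λ r s • fun p : α × α => f r p.1 * g s p.2) (μ.prod μ) :=
    ((hf r).mul_prod (hg s)).const_smul _
  rw [bilinearKernel_eq_sum]
  calc _ ≤ ∑ r, ∑ s, eLpNorm (Λ r s • fun p : α × α => f r p.1 * g s p.2) 2 (μ.prod μ) :=
        (eLpNorm_sum_le (fun r _ => Finset.aestronglyMeasurable_sum _ fun s _ => hmeas r s)
          one_le_two).trans
        (Finset.sum_le_sum fun r _ => eLpNorm_sum_le (fun s _ => hmeas r s) one_le_two)
    _ ≤ ∑ r : ι, ∑ s : ι, c * a * b := by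
        gcongr with r _ s _
        rw [eLpNorm_const_smul, eLpNorm_mul_prod (hf r) (hg s) two_ne_zero ENNReal.ofNat_ne_top,
          ← mul_assoc]
        exact mul_le_mul' (mul_le_mul' (hΛ r s) (hfa r)) (hgb s)
    _ = _ := by simp [sq, mul_assoc]

theorem eLpNorm_bilinearKernel_sub_le {Λ Λ' : Matrix ι ι ℝ} {g g' : ι → α → ℝ}
    {m δ c h : ℝ≥0∞} (hg : ∀ r, AEStronglyMeasurable (g r) μ)
    (hg' : ∀ r, AEStronglyMeasurable (g' r) μ) (hgm : ∀ r, eLpNorm (g r) 2 μ ≤ m)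
    (hg'm : ∀ r, eLpNorm (g' r) 2 μ ≤ m) (hgg' : ∀ r, eLpNorm (g r - g' r) 2 μ ≤ δ)
    (hΛΛ' : ∀ r s, ‖Λ r s - Λ' r s‖ₑ ≤ h) (hΛ' : ∀ r s, ‖Λ' r s‖ₑ ≤ c) :
    eLpNorm (bilinearKernel Λ g g - bilinearKernel Λ' g' g') 2 (μ.prod μ)
      ≤ Fintype.card ι ^ 2 * (h * m ^ 2 + 2 * c * δ * m) := by
  have hgg'meas (r : ι) : AEStronglyMeasurable ((g - g') r) μ := (hg r).sub (hg' r)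
  have hK₁ := aestronglyMeasurable_bilinearKernel (Λ - Λ') hg hg
  have hK₂ := aestronglyMeasurable_bilinearKernel Λ' hgg'meas hg
  have hK₃ := aestronglyMeasurable_bilinearKernel Λ' hg' hgg'meas
  rw [bilinearKernel_sub_bilinearKernel]
  calc _ ≤ eLpNorm (bilinearKernel (Λ - Λ') g g) 2 (μ.prod μ)
          + eLpNorm (bilinearKernel Λ' (g - g') g) 2 (μ.prod μ)
          + eLpNorm (bilinearKernel Λ' g' (g - g')) 2 (μ.prod μ) :=
        (eLpNorm_add_le (hK₁.add hK₂) hK₃ one_le_two).trans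
          (add_le_add_left (eLpNorm_add_le hK₁ hK₂ one_le_two) _)
    _ ≤ Fintype.card ι ^ 2 * (h * m * m) + Fintype.card ι ^ 2 * (c * δ * m)
          + Fintype.card ι ^ 2 * (c * m * δ) := by
        gcongr
        · exact eLpNorm_bilinearKernel_le hg hg hΛΛ' hgm hgm
        · exact eLpNorm_bilinearKernel_le hgg'meas hg hΛ' hgg' hgm
        · exact eLpNorm_bilinearKernel_le hg' hgg'meas hΛ' hg'm hgg'
    _ = _ := by ring

end Kernel

theorem eLpNorm_sub_eq_ofReal_L2dist {α : Type*} [MeasureSpace α] {S : Set α} {f g : α → ℝ}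
    (hfg : MemLp (f - g) 2 (volume.restrict S)) :
    eLpNorm (f - g) 2 (volume.restrict S) = ENNReal.ofReal (L2dist S f g) :=
  eLpNorm_two_eq_ofReal_sqrt_integral hfg

theorem L2dist_bilinearKernel_le {α ι : Type*} [MeasureSpace α] [SFinite (volume : Measure α)]
    [Fintype ι] [Nonempty ι] {S : Set α} {Λ Λ' : Matrix ι ι ℝ} {g g' : ι → α → ℝ}
    {M δ c h : ℝ} (hg : ∀ r, MemLp (g r) 2 (volume.restrict S))
    (hg' : ∀ r, MemLp (g' r) 2 (volume.restrict S))
    (hgM : ∀ r, Real.sqrt (∫ x in S, g r x ^ 2) ≤ M)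
    (hg'M : ∀ r, Real.sqrt (∫ x in S, g' r x ^ 2) ≤ M)
    (hgg' : ∀ r, L2dist S (g r) (g' r) ≤ δ) (hΛΛ' : ∀ r s, |Λ r s - Λ' r s| ≤ h)
    (hΛ' : ∀ r s, |Λ' r s| ≤ c) :
    L2dist (S ×ˢ S) (bilinearKernel Λ g g) (bilinearKernel Λ' g' g')
      ≤ Fintype.card ι ^ 2 * (h * M ^ 2 + 2 * c * δ * M) := by
  obtain ⟨i⟩ := ‹Nonempty ι›
  have hM : 0 ≤ M := (Real.sqrt_nonneg _).trans (hgM i)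
  have hδ : 0 ≤ δ := (Real.sqrt_nonneg _).trans (hgg' i)
  have hh : 0 ≤ h := (abs_nonneg _).trans (hΛΛ' i i)
  have hc : 0 ≤ c := (abs_nonneg _).trans (hΛ' i i)
  have hvol : volume.restrict (S ×ˢ S) = (volume.restrict S).prod (volume.restrict S) := by
    rw [Measure.prod_restrict, Measure.volume_eq_prod]
  have hmem : MemLp (bilinearKernel Λ g g - bilinearKernel Λ' g' g') 2
      (volume.restrict (S ×ˢ S)) := by
    rw [hvol]
    exact (memLp_bilinearKernel Λ hg hg).sub (memLp_bilinearKernel Λ' hg' hg')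
  have key := eLpNorm_bilinearKernel_sub_le (μ := volume.restrict S)
    (m := ENNReal.ofReal M) (δ := ENNReal.ofReal δ) (c := ENNReal.ofReal c)
    (h := ENNReal.ofReal h) (fun r => (hg r).1) (fun r => (hg' r).1)
    (fun r => (eLpNorm_two_eq_ofReal_sqrt_integral (hg r)).trans_le
      (ENNReal.ofReal_le_ofReal (hgM r)))
    (fun r => (eLpNorm_two_eq_ofReal_sqrt_integral (hg' r)).trans_le
      (ENNReal.ofReal_le_ofReal (hg'M r)))
    (fun r => (eLpNorm_sub_eq_ofReal_L2dist ((hg r).sub (hg' r))).trans_le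
      (ENNReal.ofReal_le_ofReal (hgg' r)))
    (fun r s => (Real.enorm_eq_ofReal_abs _).trans_le (ENNReal.ofReal_le_ofReal (hΛΛ' r s)))
    (fun r s => (Real.enorm_eq_ofReal_abs _).trans_le (ENNReal.ofReal_le_ofReal (hΛ' r s)))
  rw [← hvol, eLpNorm_sub_eq_ofReal_L2dist hmem] at key
  rw [← ENNReal.ofReal_le_ofReal_iff (by positivity)]
  refine key.trans_eq ?_
  rw [ENNReal.ofReal_mul (by positivity), ENNReal.ofReal_add (by positivity) (by positivity),
    ENNReal.ofReal_mul (by positivity), ENNReal.ofReal_mul (by positivity),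
    ENNReal.ofReal_mul (by positivity), ENNReal.ofReal_mul (by positivity),
    ENNReal.ofReal_pow hM, ENNReal.ofReal_pow (by positivity)]
  simp

theorem covN_covnetClassOf_le {d R : ℕ} (hR : 0 < R) {Q : Set (Fin d → ℝ)}
    {G : Set ((Fin d → ℝ) → ℝ)} {M δ lam h ε : ℝ}
    (hG : ∀ g ∈ G, MemLp g 2 (volume.restrict Q))
    (hM : ∀ g ∈ G, Real.sqrt (∫ x in Q, g x ^ 2) ≤ M) (hh : 0 < h)
    (hε : R ^ 2 * (h * M ^ 2 + 2 * lam * δ * M) ≤ ε) {FG : Finset ((Fin d → ℝ) → ℝ)}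
    (hFG : ↑FG ⊆ G) (hFGnet : ∀ g ∈ G, ∃ g' ∈ FG, L2dist Q g g' ≤ δ) :
    covN (L2dist (Q ×ˢ Q)) ε (covnetClassOf G R lam)
      ≤ ((⌊2 * lam / h⌋₊ + 1) ^ (R * R) * FG.card ^ R : ℕ) := by
  classical
  have : Nonempty (Fin R) := ⟨⟨0, hR⟩⟩
  set S := {Λ : Matrix (Fin R) (Fin R) ℝ | Λ.PosSemidef ∧ (lam • 1 - Λ).PosSemidef}
  have hS (Λ) (hΛ : Λ ∈ S) (p : Fin R × Fin R) : |Λ p.1 p.2| ≤ lam :=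
    hΛ.1.abs_apply_le_of_posSemidef_smul_one_sub hΛ.2 _ _
  obtain ⟨FΛ, hFΛ, hFΛcard, hFΛnet⟩ := exists_finset_net_of_forall_abs_le _ hh hS
  set net := (FΛ ×ˢ Fintype.piFinset fun _ : Fin R => FG).image
    fun q => bilinearKernel q.1 q.2 q.2
  have hnet : ↑net ⊆ covnetClassOf G R lam := by
    intro t ht
    obtain ⟨⟨Λ', g'⟩, hq, rfl⟩ := Finset.mem_image.1 ht
    obtain ⟨hΛ', hg'⟩ := Finset.mem_product.1 hq
    exact ⟨Λ', g', (hFΛ hΛ').1, (hFΛ hΛ').2, fun r => hFG (Fintype.mem_piFinset.1 hg' r),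
      fun p => rfl⟩
  have hcover : ∀ t ∈ covnetClassOf G R lam, ∃ t' ∈ net, L2dist (Q ×ˢ Q) t t' ≤ ε := by
    rintro t ⟨Λ, g, hΛ, hlamΛ, hgG, ht⟩
    obtain rfl : t = bilinearKernel Λ g g := funext ht
    obtain ⟨Λ', hΛ'FΛ, hΛΛ'⟩ := hFΛnet Λ ⟨hΛ, hlamΛ⟩
    choose g' hg'FG hgg' using fun r => hFGnet (g r) (hgG r)
    refine ⟨bilinearKernel Λ' g' g', Finset.mem_image.2 ⟨(Λ', g'),
      Finset.mem_product.2 ⟨hΛ'FΛ, Fintype.mem_piFinset.2 hg'FG⟩, rfl⟩, ?_⟩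
    refine (L2dist_bilinearKernel_le (fun r => hG _ (hgG r)) (fun r => hG _ (hFG (hg'FG r)))
      (fun r => hM _ (hgG r)) (fun r => hM _ (hFG (hg'FG r))) hgg' (fun r s => (hΛΛ' (r, s)).le)
      (fun r s => hS Λ' (hFΛ hΛ'FΛ) (r, s))).trans ?_
    simpa using hε
  calc covN (L2dist (Q ×ˢ Q)) ε (covnetClassOf G R lam) ≤ net.card := covN_le_card hnet hcover
    _ ≤ (FΛ.card * FG.card ^ R : ℕ) := by
        gcongr
        exact Finset.card_image_le.trans (by simp [Finset.card_product, Fintype.card_piFinset])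
    _ ≤ _ := by
        gcongr
        simpa using hFΛcard

theorem ENNReal.pow_mul_self_mul_pow_le {R : ℕ} (hR : 1 ≤ R) {a b k : ℝ≥0∞} (N : ℕ)
    (ha : 1 ≤ a) (hk : k ≤ b) :
    k ^ (R * R) * (N : ℝ≥0∞) ^ R ≤ (a * (b * N) ^ R) ^ R := by
  have hN : (N : ℝ≥0∞) ^ R ≤ (N : ℝ≥0∞) ^ (R * R) := by
    rcases N.eq_zero_or_pos with rfl | hN
    · simp [zero_pow (by omega : R ≠ 0)]
    · exact pow_le_pow_right₀ (by exact_mod_cast hN) (Nat.le_mul_of_pos_left R hR)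
  calc k ^ (R * R) * (N : ℝ≥0∞) ^ R ≤ b ^ (R * R) * (N : ℝ≥0∞) ^ (R * R) := by gcongr
    _ ≤ a ^ R * (b ^ (R * R) * (N : ℝ≥0∞) ^ (R * R)) := le_mul_of_one_le_left' (one_le_pow₀ ha)
    _ = (a * (b * N) ^ R) ^ R := by rw [mul_pow, mul_pow, mul_pow, ← pow_mul, ← pow_mul]

-- The grid step and the radius of the net of `G` each contribute at most `ε / 4`.
theorem covnet_approximation_error_le {M lam ε : ℝ} {R : ℕ} (hlam : 0 < lam) (hε : 0 < ε) :
    R ^ 2 * (2 * lam / (⌊8 * M ^ 2 * R ^ 2 * lam / ε⌋₊ + 1) * M ^ 2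
      + 2 * lam * (ε / (8 * M * R ^ 2 * lam)) * M) ≤ ε := by
  set x := 8 * M ^ 2 * R ^ 2 * lam / ε
  have hx : x < ⌊x⌋₊ + 1 := Nat.lt_floor_add_one x
  have hgrid : R ^ 2 * (2 * lam / (⌊x⌋₊ + 1) * M ^ 2) = ε / 4 * (x / (⌊x⌋₊ + 1)) := by
    simp only [x]
    field_simp
    ring
  have hnet : R ^ 2 * (2 * lam * (ε / (8 * M * R ^ 2 * lam)) * M)
      = ε / 4 * ((M * R ^ 2 * lam) / (M * R ^ 2 * lam)) := by
    ring
  have h1 : x / (⌊x⌋₊ + 1) ≤ 1 := div_le_one_of_le₀ hx.le (by positivity)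
  have h2 : (M * R ^ 2 * lam) / (M * R ^ 2 * lam) ≤ 1 := div_self_le_one _
  nlinarith

theorem covering_covnet_class_general {d : ℕ} (Q : Set (Fin d → ℝ))
    (G : Set ((Fin d → ℝ) → ℝ)) (M : ℝ)
    (hG : ∀ g ∈ G, MemLp g 2 (volume.restrict Q))
    (hM : ∀ g ∈ G, Real.sqrt (∫ x in Q, (g x) ^ 2) ≤ M)
    (R : ℕ) (hR : 1 ≤ R) (lam : ℝ) (hlam : 0 < lam)
    (ε : ℝ) (hε : 0 < ε) :
    covN (L2dist (Q ×ˢ Q)) ε (covnetClassOf G R lam)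
      ≤ (ENNReal.ofReal ((M ^ 2 * R ^ 2 * lam + ε) / ε) *
          (ENNReal.ofReal (2 * Real.exp 1 * (4 * M ^ 2 * R ^ 2 * lam + ε) / ε) *
            covN (L2dist Q) (ε / (8 * M * R ^ 2 * lam)) G) ^ R) ^ R := by
  set n := ⌊8 * M ^ 2 * R ^ 2 * lam / ε⌋₊
  have ha : 1 ≤ ENNReal.ofReal ((M ^ 2 * R ^ 2 * lam + ε) / ε) :=
    ENNReal.one_le_ofReal.2 ((one_le_div hε).2 (by nlinarith [sq_nonneg (M * R)]))
  have hb : ((n + 1 + 1 : ℕ) : ℝ≥0∞)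
      ≤ ENNReal.ofReal (2 * Real.exp 1 * (4 * M ^ 2 * R ^ 2 * lam + ε) / ε) := by
    rw [← ENNReal.ofReal_natCast]
    refine ENNReal.ofReal_le_ofReal ?_
    have hn : (n : ℝ) ≤ 8 * M ^ 2 * R ^ 2 * lam / ε := Nat.floor_le (by positivity)
    have he : 2 ≤ Real.exp 1 := by linarith [Real.add_one_le_exp 1]
    rw [le_div_iff₀ hε] at hn ⊢
    have hX : 0 ≤ M ^ 2 * R ^ 2 * lam := by positivity
    push_cast
    nlinarith [mul_le_mul_of_nonneg_right he hX, mul_le_mul_of_nonneg_right he hε.le]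
  by_cases hN : covN (L2dist Q) (ε / (8 * M * R ^ 2 * lam)) G = ⊤
  · have hb0 := (Nat.cast_pos.2 (n + 1).succ_pos).trans_le hb
    simp [hN, ENNReal.mul_top hb0.ne', (one_pos.trans_le ha).ne', Nat.one_le_iff_ne_zero.1 hR]
  obtain ⟨FG, hFG, hFGnet, hFGcard⟩ := exists_finset_card_eq_covN hN
  refine (covN_covnetClassOf_le hR hG hM (h := 2 * lam / (n + 1)) (by positivity)
    (covnet_approximation_error_le hlam hε) hFG hFGnet).trans ?_
  have hK : ⌊2 * lam / (2 * lam / (n + 1))⌋₊ = n + 1 := by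
    rw [div_div_cancel₀ (by positivity)]
    exact_mod_cast Nat.floor_natCast (n + 1)
  rw [hK, ← hFGcard]
  push_cast
  exact ENNReal.pow_mul_self_mul_pow_le hR _ ha (by exact_mod_cast hb)

/-- **Covering number of the generic CovNet class (Theorem
`covnet_kernel_class_general_bound`).**  For a class `G` of functions in `L²(Q)` with norms
bounded by `M`, the class `F_{R,G,λ_N}` satisfies, for every `ε > 0`,
`N(ε, F_{R,G,λ_N}) ≤ [ (M²R²λ_N+ε)/ε ⬝ { 2e(4M²R²λ_N+ε)/ε ⬝ N(ε/(8MR²λ_N), G) }^R ]^R`. -/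
theorem covering_covnet_class {d : ℕ} (Q : Set (Fin d → ℝ)) (hQ : IsCompact Q)
    (G : Set ((Fin d → ℝ) → ℝ)) (M : ℝ)
    (hG : ∀ g ∈ G, MemLp g 2 (volume.restrict Q))
    (hM : ∀ g ∈ G, Real.sqrt (∫ x in Q, (g x) ^ 2) ≤ M)
    (R : ℕ) (hR : 1 ≤ R) (lam : ℝ) (hlam : 0 < lam)
    (ε : ℝ) (hε : 0 < ε) :
    covN (L2dist (Q ×ˢ Q)) ε (covnetClassOf G R lam)
      ≤ (ENNReal.ofReal ((M ^ 2 * R ^ 2 * lam + ε) / ε) *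
          (ENNReal.ofReal (2 * Real.exp 1 * (4 * M ^ 2 * R ^ 2 * lam + ε) / ε) *
            covN (L2dist Q) (ε / (8 * M * R ^ 2 * lam)) G) ^ R) ^ R :=
  covering_covnet_class_general Q G M hG hM R hR lam hlam ε hε
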